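/- arXiv:0904.0186 — 3 statements merged into one kernel-verified Lean document; each statement's English description precedes it below -/
import Mathlib

section
/- Let (M,g) be a pseudo-Riemannian manifold of dimension n with a null line distribution L ⊂ TM. Then the Ricci tensor satisfies Ric(X,·) = 0 for all X ∈ L⊥ if and only if, locally, there exist a vector field K tangent to L and a smooth function φ such that Ric = φ·g(K,·)⊗g(K,·). Either condition implies the scalar curvature of g vanishes. -/
/-!
Nondegeneracy gives a vector `e` with `g(K₀, e) = 1`, and every vector splits as
`v = (v - g(K₀,v) e) + g(K₀,v) e` with the first summand in `L⊥ = ker g(K₀, ·)`. A symmetric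
form killing `L⊥` is therefore determined by `Ric(e, e)`, which gives
`Ric = Ric(e,e) · g(K₀,·) ⊗ g(K₀,·)`; conversely such a form visibly kills `L⊥`.
If `Ric = φ · g(K,·) ⊗ g(K,·)`, the Ricci endomorphism is the rank-one map `v ↦ φ g(K,v) K`,
whose trace `φ g(K,K)` vanishes because `K` is null.
-/

namespace LinearMap

variable {R M N : Type*} [CommRing R] [AddCommGroup M] [Module R M] [AddCommGroup N]
  [Module R N]

lemma SeparatingLeft.exists_apply_eq_one {K : Type*} [Field K] [Module K M] [Module K N]
    {B : M →ₗ[K] N →ₗ[K] K} (hB : B.SeparatingLeft) {x : M} (hx : x ≠ 0) :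
    ∃ y, B x y = 1 := by
  obtain ⟨u, hu⟩ : ∃ u, B x u ≠ 0 := by
    by_contra! h
    exact hx (hB x h)
  exact ⟨(B x u)⁻¹ • u, by simp [inv_mul_cancel₀ hu]⟩

lemma SeparatingLeft.eq_smulRight_of_apply_eq {B : M →ₗ[R] N →ₗ[R] R} (hB : B.SeparatingLeft)
    {E : M →ₗ[R] M} {c : M →ₗ[R] R} {k : M} (hE : ∀ v w, B (E v) w = c v * B k w) :
    E = c.smulRight k := by
  ext v
  refine sub_eq_zero.mp (hB _ fun w => ?_)
  simp [hE]

lemma BilinForm.IsSymm.apply_eq_mul_of_ker_le {B : LinearMap.BilinForm R M} (hB : B.IsSymm)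
    {f : M →ₗ[R] R} {e : M} (he : f e = 1) (hker : ∀ v, f v = 0 → B v = 0) (v w : M) :
    B v w = B e e * f v * f w := by
  have proj_mem_ker : ∀ x, f (x - f x • e) = 0 := fun x => by simp [he]
  have apply_eq_mul_apply_left : ∀ x y, B x y = f x * B e y := fun x y => by
    have := LinearMap.congr_fun (hker _ (proj_mem_ker x)) y
    simp only [map_sub, map_smul, LinearMap.sub_apply, LinearMap.smul_apply, smul_eq_mul,
      LinearMap.zero_apply] at this
    linear_combination this
  rw [apply_eq_mul_apply_left, ← hB.eq, apply_eq_mul_apply_left, ← hB.eq]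
  ring

end LinearMap

theorem ricci_null_line_characterisation_general
    {V : Type*} [AddCommGroup V] [Module ℝ V] [FiniteDimensional ℝ V]
    (g Ric : LinearMap.BilinForm ℝ V)
    (hg : g.Nondegenerate) (hRsymm : Ric.IsSymm)
    (K₀ : V) (hK₀ : K₀ ≠ 0) (hnull : g K₀ K₀ = 0)
    (ricEnd : V →ₗ[ℝ] V) (hric : ∀ v w, g (ricEnd v) w = Ric v w) :
    ((∀ v, g K₀ v = 0 → Ric v = 0) ↔
      ∃ (φ : ℝ) (K : V), (∃ l : ℝ, K = l • K₀) ∧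
        ∀ v w, Ric v w = φ * g K v * g K w) ∧
    (((∀ v, g K₀ v = 0 → Ric v = 0) ∨
      (∃ (φ : ℝ) (K : V), (∃ l : ℝ, K = l • K₀) ∧
        ∀ v w, Ric v w = φ * g K v * g K w)) →
      LinearMap.trace ℝ V ricEnd = 0) := by
  obtain ⟨e, he⟩ := hg.1.exists_apply_eq_one hK₀
  have hiff : (∀ v, g K₀ v = 0 → Ric v = 0) ↔
      ∃ (φ : ℝ) (K : V), (∃ l : ℝ, K = l • K₀) ∧ ∀ v w, Ric v w = φ * g K v * g K w := by
    refine ⟨fun h => ⟨Ric e e, K₀, ⟨1, (one_smul ℝ K₀).symm⟩,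
      hRsymm.apply_eq_mul_of_ker_le he h⟩, ?_⟩
    rintro ⟨φ, K, ⟨l, rfl⟩, hK⟩ v hv
    ext w
    simp [hK, hv]
  refine ⟨hiff, fun h => ?_⟩
  obtain ⟨φ, K, ⟨l, rfl⟩, hK⟩ := h.elim hiff.mp id
  have hEnd : ricEnd = (φ • g (l • K₀)).smulRight (l • K₀) :=
    hg.1.eq_smulRight_of_apply_eq fun v w => by
      simp only [hric, hK, LinearMap.smul_apply, smul_eq_mul]
  simp [hEnd, hnull]

/-- Pointwise (linear-algebra) form of the paper's lemma: on a
tangent space V with non-degenerate symmetric bilinear form g (the metric), a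
null line L spanned by K₀ ≠ 0 with g(K₀,K₀) = 0, and symmetric bilinear form
Ric (the Ricci tensor), realised by the g-symmetric endomorphism `ricEnd`:
Ric(X,·) = 0 for all X ∈ L⊥ if and only if there are a vector K tangent to L
and a scalar φ with Ric = φ·g(K,·)⊗g(K,·); and either condition implies that
the scalar curvature (the g-trace of Ric, i.e. the trace of `ricEnd`) vanishes. -/
theorem ricci_null_line_characterisation
    {V : Type*} [AddCommGroup V] [Module ℝ V] [FiniteDimensional ℝ V]
    (g Ric : LinearMap.BilinForm ℝ V)
    (hg : g.Nondegenerate) (hgsymm : g.IsSymm) (hRsymm : Ric.IsSymm)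
    (K₀ : V) (hK₀ : K₀ ≠ 0) (hnull : g K₀ K₀ = 0)
    (ricEnd : V →ₗ[ℝ] V) (hric : ∀ v w, g (ricEnd v) w = Ric v w) :
    ((∀ v, g K₀ v = 0 → Ric v = 0) ↔
      ∃ (φ : ℝ) (K : V), (∃ l : ℝ, K = l • K₀) ∧
        ∀ v w, Ric v w = φ * g K v * g K w) ∧
    (((∀ v, g K₀ v = 0 → Ric v = 0) ∨
      (∃ (φ : ℝ) (K : V), (∃ l : ℝ, K = l • K₀) ∧
        ∀ v w, Ric v w = φ * g K v * g K w)) →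
      LinearMap.trace ℝ V ricEnd = 0) :=
  ricci_null_line_characterisation_general g Ric hg hRsymm K₀ hK₀ hnull ricEnd hric
end

section
/- Let (M,g) be a pseudo-Riemannian manifold admitting a null line distribution L parallel with respect to the Levi-Civita connection, and suppose Ric(X,·) = 0 for all X ∈ L⊥. Then the Weyl tensor satisfies W(·,K,K,X) = 0 for all K ∈ L and all X ∈ L⊥. -/
open scoped BigOperators

/-! Local-coordinate pseudo-Riemannian geometry on a chart `ι → ℝ`. -/

variable {ι : Type} [Fintype ι] [DecidableEq ι]

/-- Partial derivative of a function in the i-th coordinate direction. -/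
noncomputable def pd (i : ι) (f : (ι → ℝ) → ℝ) (x : ι → ℝ) : ℝ :=
  fderiv ℝ f x (Pi.single i 1)

/-- Christoffel symbols Γ^k_{ij} of the Levi-Civita connection of the metric g. -/
noncomputable def christoffel (g : (ι → ℝ) → Matrix ι ι ℝ) (k i j : ι) (x : ι → ℝ) : ℝ :=
  (1/2) * ∑ l, (g x)⁻¹ k l *
    (pd i (fun y => g y l j) x + pd j (fun y => g y l i) x - pd l (fun y => g y i j) x)

/-- Riemann curvature tensor R^l_{kij} (component of R(∂ᵢ,∂ⱼ)∂ₖ along ∂ₗ). -/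
noncomputable def riemann (g : (ι → ℝ) → Matrix ι ι ℝ) (l k i j : ι) (x : ι → ℝ) : ℝ :=
  pd i (christoffel g l j k) x - pd j (christoffel g l i k) x
  + ∑ m, christoffel g l i m x * christoffel g m j k x
  - ∑ m, christoffel g l j m x * christoffel g m i k x

/-- Ricci tensor Ric_{jk} = R^i_{j i k}. -/
noncomputable def ricci (g : (ι → ℝ) → Matrix ι ι ℝ) (j k : ι) (x : ι → ℝ) : ℝ :=
  ∑ i, riemann g i j i k x

/-- Scalar curvature Scal = g^{jk} Ric_{jk}. -/
noncomputable def scal (g : (ι → ℝ) → Matrix ι ι ℝ) (x : ι → ℝ) : ℝ :=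
  ∑ j, ∑ k, (g x)⁻¹ j k * ricci g j k x

/-- Schouten tensor P = (1/(n-2))(Ric - (Scal/(2(n-1))) g). -/
noncomputable def schouten (g : (ι → ℝ) → Matrix ι ι ℝ) (j k : ι) (x : ι → ℝ) : ℝ :=
  (1 / ((Fintype.card ι : ℝ) - 2)) *
    (ricci g j k x - scal g x / (2 * ((Fintype.card ι : ℝ) - 1)) * g x j k)

/-- Covariant derivative of the vector field K in the direction of the tangent
vector v at the point x, (∇_v K)^k = v(K^k) + Γ^k_{ij} vⁱ Kʲ. -/
noncomputable def covDeriv (g : (ι → ℝ) → Matrix ι ι ℝ) (K : (ι → ℝ) → ι → ℝ)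
    (v : ι → ℝ) (x : ι → ℝ) : ι → ℝ :=
  fun k => fderiv ℝ (fun y => K y k) x v
    + ∑ i, ∑ j, christoffel g k i j x * v i * K x j

/-- The metric evaluated on tangent vectors. -/
noncomputable def gVal (g : (ι → ℝ) → Matrix ι ι ℝ) (v w : ι → ℝ) (x : ι → ℝ) : ℝ :=
  ∑ i, ∑ j, v i * g x i j * w j

/-- The Ricci tensor evaluated on tangent vectors. -/
noncomputable def ricVal (g : (ι → ℝ) → Matrix ι ι ℝ) (v w : ι → ℝ) (x : ι → ℝ) : ℝ :=
  ∑ i, ∑ j, ricci g i j x * v i * w j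

/-- The Schouten tensor evaluated on tangent vectors. -/
noncomputable def schoutenVal (g : (ι → ℝ) → Matrix ι ι ℝ) (v w : ι → ℝ) (x : ι → ℝ) : ℝ :=
  ∑ i, ∑ j, schouten g i j x * v i * w j

/-- The (4,0) Riemann tensor R(u,v,w,z) = g(R(u,v)w, z), evaluated on vectors. -/
noncomputable def riemVal (g : (ι → ℝ) → Matrix ι ι ℝ) (u v w z : ι → ℝ) (x : ι → ℝ) : ℝ :=
  ∑ a, ∑ b, ∑ c, ∑ d, (∑ m, riemann g m c a b x * g x m d) * u a * v b * w c * z d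

/-- The Weyl tensor W = Riem − P ⊙ g (Kulkarni–Nomizu product), on vectors. -/
noncomputable def weylVal (g : (ι → ℝ) → Matrix ι ι ℝ) (u v w z : ι → ℝ) (x : ι → ℝ) : ℝ :=
  riemVal g u v w z x
    - (schoutenVal g u w x * gVal g v z x + schoutenVal g v z x * gVal g u w x
       - schoutenVal g u z x * gVal g v w x - schoutenVal g v w x * gVal g u z x)


set_option linter.unusedSectionVars false


notation "Sm" => ContDiff ℝ ((⊤:ℕ∞) : WithTop ℕ∞)

lemma two_le_top' : (2 : WithTop ℕ∞) ≤ ((⊤:ℕ∞) : WithTop ℕ∞) := by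
  have := WithTop.coe_le_coe.mpr (le_top : (2:ℕ∞) ≤ ⊤)
  simpa using this

lemma one_le_top' : (1 : WithTop ℕ∞) ≤ ((⊤:ℕ∞) : WithTop ℕ∞) :=
  le_trans (by norm_num) two_le_top'

lemma top_add_one' : ((⊤:ℕ∞) : WithTop ℕ∞) + 1 ≤ ((⊤:ℕ∞) : WithTop ℕ∞) := by norm_cast

lemma sdAt {f : (ι → ℝ) → ℝ} (hf : Sm f) {x : ι → ℝ} : DifferentiableAt ℝ f x :=
  (hf.differentiable (by simp)).differentiableAt

lemma pd_contDiff {f : (ι → ℝ) → ℝ} (hf : Sm f) (i : ι) : Sm (pd i f) := by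
  unfold pd
  exact (hf.fderiv_right top_add_one').clm_apply contDiff_const

lemma pd_comm {f : (ι → ℝ) → ℝ} (hf : Sm f) (i j : ι) (x : ι → ℝ) :
    pd i (pd j f) x = pd j (pd i f) x := by
  have hsymm := (hf.contDiffAt (x := x)).isSymmSndFDerivAt
    (by rw [minSmoothness_of_isRCLikeNormedField]; exact two_le_top')
  have key : ∀ v w : ι → ℝ, fderiv ℝ (fun y => fderiv ℝ f y w) x v
      = fderiv ℝ (fderiv ℝ f) x v w := by
    intro v w
    rw [fderiv_clm_apply ((hf.fderiv_right top_add_one').differentiable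
      (by simp) x) (differentiableAt_const w)]
    simp
  unfold pd
  rw [key, key, hsymm.eq]

lemma pd_congr {f h : (ι → ℝ) → ℝ} {x : ι → ℝ} (hfh : f =ᶠ[nhds x] h) (i : ι) :
    pd i f x = pd i h x := by
  unfold pd; rw [hfh.fderiv_eq]

lemma pd_sum {κ : Type*} [Fintype κ] {f : κ → (ι → ℝ) → ℝ} {x : ι → ℝ}
    (h : ∀ j, DifferentiableAt ℝ (f j) x) (i : ι) :
    pd i (fun y => ∑ j, f j y) x = ∑ j, pd i (f j) x := by
  unfold pd
  rw [fderiv_fun_sum (fun j _ => h j)]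
  simp

lemma pd_mul {f h : (ι → ℝ) → ℝ} {x : ι → ℝ} (hf : DifferentiableAt ℝ f x)
    (hh : DifferentiableAt ℝ h x) (i : ι) :
    pd i (fun y => f y * h y) x = pd i f x * h x + f x * pd i h x := by
  unfold pd
  rw [fderiv_fun_mul hf hh]
  simp [smul_eq_mul]
  ring

lemma contDiff_det' {f : (ι → ℝ) → Matrix ι ι ℝ}
    (hf : ∀ i j, Sm fun y => f y i j) :
    Sm fun y => (f y).det := by
  simp only [Matrix.det_apply']
  exact ContDiff.sum fun σ _ => contDiff_const.mul (contDiff_prod fun i _ => hf (σ i) i)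

lemma contDiff_inv_entry {f : (ι → ℝ) → Matrix ι ι ℝ}
    (hf : ∀ i j, Sm fun y => f y i j) (hdet : ∀ x, IsUnit (f x).det) (k l : ι) :
    Sm fun y => (f y)⁻¹ k l := by
  have h1 : Sm fun y => (f y).det := contDiff_det' hf
  have h2 : Sm fun y => ((f y).updateRow l (Pi.single k 1)).det := by
    apply contDiff_det'
    intro a b
    rcases eq_or_ne a l with rfl | h
    · simpa [Matrix.updateRow_apply] using contDiff_const
    · simpa [Matrix.updateRow_apply, h] using hf a b
  have key : ∀ y, (f y)⁻¹ k l = ((f y).det)⁻¹ * ((f y).updateRow l (Pi.single k 1)).det := by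
    intro y
    rw [Matrix.inv_def]
    simp [Matrix.adjugate_apply, Ring.inverse_eq_inv']
  simp only [key]
  exact (h1.inv fun y => (hdet y).ne_zero).mul h2

lemma christoffel_contDiff {g : (ι → ℝ) → Matrix ι ι ℝ}
    (hgsm : ∀ i j, ContDiff ℝ (⊤ : ℕ∞) fun y => g y i j) (hdet : ∀ x, IsUnit (g x).det)
    (k i j : ι) : Sm (christoffel g k i j) := by
  unfold christoffel
  apply ContDiff.mul contDiff_const
  apply ContDiff.sum
  intro l _
  refine ContDiff.mul (contDiff_inv_entry (fun a b => (hgsm a b).of_le (by simp)) hdet k l) ?_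
  exact ((pd_contDiff ((hgsm l j).of_le (by simp)) i).add
    (pd_contDiff ((hgsm l i).of_le (by simp)) j)).sub (pd_contDiff ((hgsm i j).of_le (by simp)) l)
lemma pd_add {f h : (ι → ℝ) → ℝ} {x : ι → ℝ} (hf : DifferentiableAt ℝ f x)
    (hh : DifferentiableAt ℝ h x) (i : ι) :
    pd i (fun y => f y + h y) x = pd i f x + pd i h x := by
  unfold pd
  rw [fderiv_fun_add hf hh]
  simp

/-- (∇_j K)^l as a function of the point. -/
noncomputable def covA (g : (ι → ℝ) → Matrix ι ι ℝ) (K : (ι → ℝ) → ι → ℝ) (j l : ι)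
    (y : ι → ℝ) : ℝ :=
  pd j (fun z => K z l) y + ∑ c, christoffel g l j c y * K y c

lemma covA_contDiff {g : (ι → ℝ) → Matrix ι ι ℝ} {K : (ι → ℝ) → ι → ℝ}
    (hgsm : ∀ i j, ContDiff ℝ (⊤ : ℕ∞) fun y => g y i j) (hdet : ∀ x, IsUnit (g x).det)
    (hKsm : ∀ i, ContDiff ℝ (⊤ : ℕ∞) fun y => K y i) (j l : ι) :
    Sm (covA g K j l) := by
  unfold covA
  exact (pd_contDiff ((hKsm l).of_le (by simp)) j).add (ContDiff.sum fun c _ =>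
    (christoffel_contDiff hgsm hdet l j c).mul ((hKsm c).of_le (by simp)))

lemma covA_eq_theta {g : (ι → ℝ) → Matrix ι ι ℝ} {K : (ι → ℝ) → ι → ℝ}
    {θ : (ι → ℝ) → (ι → ℝ) → ℝ}
    (hKpar : ∀ x v, covDeriv g K v x = θ x v • K x) (y : ι → ℝ) (j l : ι) :
    covA g K j l y = θ y (Pi.single j 1) * K y l := by
  have h := congrFun (hKpar y (Pi.single j 1)) l
  unfold covDeriv at h
  simp only [Pi.smul_apply, smul_eq_mul] at h
  rw [covA, ← h]
  congr 1
  rw [Finset.sum_comm]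
  apply Finset.sum_congr rfl
  intro c _
  simp [Pi.single_apply, mul_ite, ite_mul, mul_comm, Finset.sum_ite_eq, Finset.sum_ite_eq']
lemma riemann_contract {g : (ι → ℝ) → Matrix ι ι ℝ} {K : (ι → ℝ) → ι → ℝ}
    (hgsm : ∀ i j, ContDiff ℝ (⊤ : ℕ∞) fun y => g y i j) (hdet : ∀ x, IsUnit (g x).det)
    (hKsm : ∀ i, ContDiff ℝ (⊤ : ℕ∞) fun y => K y i) (x : ι → ℝ) (a b l : ι) :
    ∑ c, riemann g l c a b x * K x c =
      pd a (covA g K b l) x - pd b (covA g K a l) x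
      + ∑ m, christoffel g l a m x * covA g K b m x
      - ∑ m, christoffel g l b m x * covA g K a m x := by
  have hK : ∀ c, Sm fun y => K y c := fun c => (hKsm c).of_le (by simp)
  have hΓ : ∀ l a c, Sm (christoffel g l a c) := fun l a c =>
    christoffel_contDiff hgsm hdet l a c
  -- pd of the S-sum
  have step1 : ∀ a b l, pd a (fun y => ∑ c, christoffel g l b c y * K y c) x
      = ∑ c, pd a (christoffel g l b c) x * K x c
        + ∑ c, christoffel g l b c x * pd a (fun y => K y c) x := by
    intro a b l
    rw [pd_sum (fun c => sdAt ((hΓ l b c).mul (hK c))) a, ← Finset.sum_add_distrib]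
    exact Finset.sum_congr rfl fun c _ => pd_mul (sdAt (hΓ l b c)) (sdAt (hK c)) a
  -- pd of covA splits
  have step2 : ∀ a b l, pd a (covA g K b l) x
      = pd a (pd b (fun z => K z l)) x
        + ∑ c, pd a (christoffel g l b c) x * K x c
        + ∑ c, christoffel g l b c x * pd a (fun y => K y c) x := by
    intro a b l
    have hcov : covA g K b l = fun y => pd b (fun z => K z l) y
        + ∑ c, christoffel g l b c y * K y c := rfl
    rw [hcov, pd_add (sdAt (pd_contDiff (hK l) b))
      (sdAt (ContDiff.sum fun c _ => (hΓ l b c).mul (hK c))) a, step1 a b l, add_assoc]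
  -- split of Γ·covA sums
  have step3 : ∀ a b l, ∑ m, christoffel g l a m x * covA g K b m x
      = ∑ m, christoffel g l a m x * pd b (fun z => K z m) x
        + ∑ m, christoffel g l a m x * (∑ c, christoffel g m b c x * K x c) := by
    intro a b l
    rw [← Finset.sum_add_distrib]
    refine Finset.sum_congr rfl fun m _ => ?_
    rw [covA, mul_add]
  -- double sum swap
  have step4 : ∀ a b l, ∑ c, (∑ m, christoffel g l a m x * christoffel g m b c x) * K x c
      = ∑ m, christoffel g l a m x * (∑ c, christoffel g m b c x * K x c) := by
    intro a b l
    simp only [Finset.sum_mul, Finset.mul_sum]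
    rw [Finset.sum_comm]
    exact Finset.sum_congr rfl fun c _ => Finset.sum_congr rfl fun m _ => mul_assoc _ _ _
  -- expand riemann on the LHS
  have expand : ∑ c, riemann g l c a b x * K x c
      = ∑ c, pd a (christoffel g l b c) x * K x c
        - ∑ c, pd b (christoffel g l a c) x * K x c
        + ∑ m, christoffel g l a m x * (∑ c, christoffel g m b c x * K x c)
        - ∑ m, christoffel g l b m x * (∑ c, christoffel g m a c x * K x c) := by
    rw [← step4 a b l, ← step4 b a l]
    simp only [riemann, sub_mul, add_mul, Finset.sum_sub_distrib, Finset.sum_add_distrib]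
  rw [expand, step2 a b l, step2 b a l, step3 a b l, step3 b a l,
    pd_comm (hK l) a b]
  ring
lemma riemann_K_proportional {g : (ι → ℝ) → Matrix ι ι ℝ} {K : (ι → ℝ) → ι → ℝ}
    {θ : (ι → ℝ) → (ι → ℝ) → ℝ}
    (hgsm : ∀ i j, ContDiff ℝ (⊤ : ℕ∞) fun y => g y i j) (hdet : ∀ x, IsUnit (g x).det)
    (hKsm : ∀ i, ContDiff ℝ (⊤ : ℕ∞) fun y => K y i) (hKne : ∀ x, K x ≠ 0)
    (hKpar : ∀ x v, covDeriv g K v x = θ x v • K x) (x : ι → ℝ) :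
    ∃ cc : ι → ι → ℝ, ∀ a b l, ∑ c, riemann g l c a b x * K x c = cc a b * K x l := by
  obtain ⟨l0, hl0⟩ : ∃ l0, K x l0 ≠ 0 := by
    by_contra h; push_neg at h; exact hKne x (funext h)
  set θf : ι → (ι → ℝ) → ℝ := fun j y => covA g K j l0 y / K y l0 with hθf
  have hU : ∀ᶠ y in nhds x, K y l0 ≠ 0 := by
    have hc : ContinuousAt (fun y => K y l0) x :=
      (sdAt ((hKsm l0).of_le (by simp))).continuousAt
    exact hc.eventually_ne hl0
  have hAeq : ∀ j l, (covA g K j l) =ᶠ[nhds x] fun y => θf j y * K y l := by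
    intro j l
    filter_upwards [hU] with y hy
    have h0 : θf j y = θ y (Pi.single j 1) := by
      simp only [hθf]
      rw [covA_eq_theta hKpar y j l0]
      field_simp
    rw [covA_eq_theta hKpar y j l, h0]
  have hθdiff : ∀ j, DifferentiableAt ℝ (θf j) x := by
    intro j
    show DifferentiableAt ℝ (fun y => covA g K j l0 y / K y l0) x
    simp only [div_eq_mul_inv]
    exact (sdAt (covA_contDiff hgsm hdet hKsm j l0)).mul
      ((sdAt ((hKsm l0).of_le (by simp))).inv hl0)
  have hθx : ∀ j l, covA g K j l x = θf j x * K x l := fun j l => (hAeq j l).self_of_nhds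
  have hpdA : ∀ a b l, pd a (covA g K b l) x
      = pd a (θf b) x * K x l + θf b x * pd a (fun y => K y l) x := by
    intro a b l
    rw [pd_congr (hAeq b l) a, pd_mul (hθdiff b) (sdAt ((hKsm l).of_le (by simp))) a]
  refine ⟨fun a b => pd a (θf b) x - pd b (θf a) x, fun a b l => ?_⟩
  have hsum : ∀ a b l, ∑ m, christoffel g l a m x * covA g K b m x
      = θf b x * (covA g K a l x - pd a (fun z => K z l) x) := by
    intro a b l
    have h1 : ∀ m, christoffel g l a m x * covA g K b m x
        = θf b x * (christoffel g l a m x * K x m) := by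
      intro m; rw [hθx b m]; ring
    rw [Finset.sum_congr rfl fun m _ => h1 m, ← Finset.mul_sum]
    congr 1
    rw [covA]
    ring
  rw [riemann_contract hgsm hdet hKsm x a b l, hpdA a b l, hpdA b a l,
    hsum a b l, hsum b a l, hθx a l, hθx b l]
  ring
lemma riemVal_zero {g : (ι → ℝ) → Matrix ι ι ℝ} {K : (ι → ℝ) → ι → ℝ}
    {θ : (ι → ℝ) → (ι → ℝ) → ℝ}
    (hgsm : ∀ i j, ContDiff ℝ (⊤ : ℕ∞) fun y => g y i j) (hdet : ∀ x, IsUnit (g x).det)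
    (hKsm : ∀ i, ContDiff ℝ (⊤ : ℕ∞) fun y => K y i) (hKne : ∀ x, K x ≠ 0)
    (hKpar : ∀ x v, covDeriv g K v x = θ x v • K x)
    (x : ι → ℝ) (u v : ι → ℝ) (hv : gVal g (K x) v x = 0) :
    riemVal g u (K x) (K x) v x = 0 := by
  obtain ⟨cc, hcc⟩ := riemann_K_proportional hgsm hdet hKsm hKne hKpar x
  unfold riemVal
  apply Finset.sum_eq_zero; intro a _
  apply Finset.sum_eq_zero; intro b _
  have key : ∀ m d, ∑ c, riemann g m c a b x * g x m d * u a * K x b * K x c * v d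
      = cc a b * K x m * (g x m d * u a * K x b * v d) := by
    intro m d
    have h1 : ∀ c, riemann g m c a b x * g x m d * u a * K x b * K x c * v d
        = riemann g m c a b x * K x c * (g x m d * u a * K x b * v d) := fun c => by ring
    rw [Finset.sum_congr rfl fun c _ => h1 c, ← Finset.sum_mul, hcc a b m]
  calc ∑ c, ∑ d, (∑ m, riemann g m c a b x * g x m d) * u a * K x b * K x c * v d
      = ∑ c, ∑ d, ∑ m, riemann g m c a b x * g x m d * u a * K x b * K x c * v d := by
        refine Finset.sum_congr rfl fun c _ => Finset.sum_congr rfl fun d _ => ?_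
        simp only [Finset.sum_mul]
    _ = ∑ d, ∑ m, ∑ c, riemann g m c a b x * g x m d * u a * K x b * K x c * v d := by
        rw [Finset.sum_comm]
        exact Finset.sum_congr rfl fun d _ => Finset.sum_comm
    _ = ∑ d, ∑ m, cc a b * K x m * (g x m d * u a * K x b * v d) := by
        exact Finset.sum_congr rfl fun d _ => Finset.sum_congr rfl fun m _ => key m d
    _ = (cc a b * u a * K x b) * ∑ d, ∑ m, K x m * g x m d * v d := by
        simp only [Finset.mul_sum]
        refine Finset.sum_congr rfl fun d _ => Finset.sum_congr rfl fun m _ => by ring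
    _ = 0 := by
        have : ∑ d, ∑ m, K x m * g x m d * v d = gVal g (K x) v x := by
          rw [Finset.sum_comm]; rfl
        rw [this, hv, mul_zero]

lemma schoutenVal_zero {g : (ι → ℝ) → Matrix ι ι ℝ} {v w : ι → ℝ} {x : ι → ℝ}
    (hr : ricVal g v w x = 0) (hg : gVal g v w x = 0) :
    schoutenVal g v w x = 0 := by
  unfold schoutenVal
  have h1 : ∀ i j : ι, schouten g i j x * v i * w j
      = (1 / ((Fintype.card ι : ℝ) - 2)) * (ricci g i j x * v i * w j)
        - (1 / ((Fintype.card ι : ℝ) - 2)) * (scal g x / (2 * ((Fintype.card ι : ℝ) - 1)))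
          * (v i * g x i j * w j) := by
    intro i j; unfold schouten; ring
  calc ∑ i, ∑ j, schouten g i j x * v i * w j
      = (1 / ((Fintype.card ι : ℝ) - 2)) * ricVal g v w x
        - (1 / ((Fintype.card ι : ℝ) - 2)) * (scal g x / (2 * ((Fintype.card ι : ℝ) - 1)))
          * gVal g v w x := by
        unfold ricVal gVal
        simp only [h1, Finset.sum_sub_distrib, Finset.mul_sum]
    _ = 0 := by rw [hr, hg]; ring

/-- If (M,g) has a parallel null line distribution L (spanned by
the nowhere-vanishing null vector field K, with ∇K = θ ⊗ K) and Ric(X,·) = 0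
for all X ∈ L⊥, then the Weyl tensor satisfies W(·,K,K,X) = 0 for all X ∈ L⊥. -/
theorem weyl_vanishing_on_parallel_null_line
    (g : (ι → ℝ) → Matrix ι ι ℝ) (K : (ι → ℝ) → ι → ℝ)
    (θ : (ι → ℝ) → (ι → ℝ) → ℝ)
    (hgsm : ∀ i j, ContDiff ℝ (⊤ : ℕ∞) fun y => g y i j)
    (hgsymm : ∀ x i j, g x i j = g x j i)
    (hdet : ∀ x, IsUnit (g x).det)
    (hKsm : ∀ i, ContDiff ℝ (⊤ : ℕ∞) fun y => K y i)
    (hKne : ∀ x, K x ≠ 0)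
    (hKnull : ∀ x, gVal g (K x) (K x) x = 0)
    (hKpar : ∀ x v, covDeriv g K v x = θ x v • K x)
    (hric : ∀ x v, gVal g (K x) v x = 0 → ∀ w, ricVal g v w x = 0) :
    ∀ x u v, gVal g (K x) v x = 0 → weylVal g u (K x) (K x) v x = 0 := by
  intro x u v hv
  have hKK : gVal g (K x) (K x) x = 0 := hKnull x
  have hricK : ∀ w, ricVal g (K x) w x = 0 := hric x (K x) hKK
  unfold weylVal
  rw [riemVal_zero hgsm hdet hKsm hKne hKpar x u v hv, hv, hKK,
    schoutenVal_zero (hricK v) hv, schoutenVal_zero (hricK (K x)) hKK]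
  ring
end

section
/- Let (M̃,g̃) be a 7-dimensional spin manifold of signature (4,3) with a parallel spinor ψ with ⟨ψ,ψ⟩ ≠ 0 and a parallel line of null spinors spanned by φ. Then the vector field V defined by g̃(V,X) = ⟨X·ψ, φ⟩ spans a line bundle that is parallel with respect to the Levi-Civita connection, and V is nowhere zero. -/
open Matrix

/-- The five explicit 4×4 real γ-matrices from the paper. -/
noncomputable def gammaMat : Fin 5 → Matrix (Fin 4) (Fin 4) ℝ
  | 0 => !![0,0,0,1; 0,0,1,0; 0,1,0,0; 1,0,0,0]
  | 1 => !![0,0,0,-1; 0,0,1,0; 0,-1,0,0; 1,0,0,0]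
  | 2 => !![0,0,1,0; 0,0,0,-1; 1,0,0,0; 0,-1,0,0]
  | 3 => !![0,0,-1,0; 0,0,0,-1; 1,0,0,0; 0,1,0,0]
  | 4 => !![1,0,0,0; 0,1,0,0; 0,0,-1,0; 0,0,0,-1]

/-- The seven 8×8 σ-matrices, built in 2×2 block form from the γ-matrices. -/
noncomputable def sigmaMat : Fin 7 → Matrix (Fin 4 ⊕ Fin 4) (Fin 4 ⊕ Fin 4) ℝ
  | 0 => fromBlocks 0 (gammaMat 0) (gammaMat 0) 0
  | 1 => fromBlocks 0 (gammaMat 2) (gammaMat 2) 0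
  | 2 => fromBlocks 0 (gammaMat 4) (gammaMat 4) 0
  | 3 => fromBlocks 1 0 0 (-1)
  | 4 => fromBlocks 0 (gammaMat 1) (gammaMat 1) 0
  | 5 => fromBlocks 0 (gammaMat 3) (gammaMat 3) 0
  | 6 => fromBlocks 0 (-1) 1 0

/-- The diagonal metric g̃ = diag(1,1,1,1,-1,-1,-1) of signature (4,3). -/
def gMetric : Fin 7 → Fin 7 → ℝ :=
  fun i j => if i = j then (if (i : ℕ) < 4 then 1 else -1) else 0

/-- The spinor module ℝ⁸. -/
abbrev Spinor := Fin 4 ⊕ Fin 4 → ℝ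

/-- The invariant bilinear form ⟨φ,ψ⟩ := -(σ₄σ₅σ₆ φ, ψ), where (.,.) is the
Euclidean standard inner product on ℝ⁸. -/
noncomputable def spinProd (φ ψ : Spinor) : ℝ :=
  -(((sigmaMat 4 * sigmaMat 5 * sigmaMat 6) *ᵥ φ) ⬝ᵥ ψ)

/-- Clifford multiplication of a vector X ∈ ℝ^{4,3} on a spinor: X·ψ = Σᵢ Xⁱ σᵢ ψ. -/
noncomputable def cliffordMul (X : Fin 7 → ℝ) (ψ : Spinor) : Spinor :=
  ∑ i, X i • (sigmaMat i *ᵥ ψ)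

/-- The metric g̃ of signature (4,3) as a bilinear pairing on ℝ⁷. -/
def gPair (X Y : Fin 7 → ℝ) : ℝ := ∑ i, ∑ j, gMetric i j * X i * Y j

/-! If ⟨ψ,ψ⟩ ≠ 0, the eight spinors ψ, σ₀ψ, …, σ₆ψ are mutually ⟨·,·⟩-orthogonal and
non-null, so they form a basis of Δ₄,₃ = ℝ⁸. Expanding φ in this basis gives the identity
⟨ψ,ψ⟩ φ = ⟨ψ,φ⟩ ψ - V·ψ, where V is the vector dual to X ↦ ⟨X·ψ, φ⟩. Hence V = 0 would force
φ to be a multiple of the non-null ψ, which is impossible for a nonzero null φ.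
Parallelism of the line spanned by V is the Leibniz rule applied to g̃(V,X) = ⟨X·ψ, φ⟩: since
ψ is parallel, only the derivative of X and the factor f coming from ∇̃φ = f ⊗ φ survive. -/

lemma sigmaMat_mulVec (i : Fin 7) (x : Spinor) : sigmaMat i *ᵥ x = ![
    Sum.elim ![x (.inr 3), x (.inr 2), x (.inr 1), x (.inr 0)]
      ![x (.inl 3), x (.inl 2), x (.inl 1), x (.inl 0)],
    Sum.elim ![x (.inr 2), -x (.inr 3), x (.inr 0), -x (.inr 1)]
      ![x (.inl 2), -x (.inl 3), x (.inl 0), -x (.inl 1)],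
    Sum.elim ![x (.inr 0), x (.inr 1), -x (.inr 2), -x (.inr 3)]
      ![x (.inl 0), x (.inl 1), -x (.inl 2), -x (.inl 3)],
    Sum.elim ![x (.inl 0), x (.inl 1), x (.inl 2), x (.inl 3)]
      ![-x (.inr 0), -x (.inr 1), -x (.inr 2), -x (.inr 3)],
    Sum.elim ![-x (.inr 3), x (.inr 2), -x (.inr 1), x (.inr 0)]
      ![-x (.inl 3), x (.inl 2), -x (.inl 1), x (.inl 0)],
    Sum.elim ![-x (.inr 2), -x (.inr 3), x (.inr 0), x (.inr 1)]
      ![-x (.inl 2), -x (.inl 3), x (.inl 0), x (.inl 1)],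
    Sum.elim ![-x (.inr 0), -x (.inr 1), -x (.inr 2), -x (.inr 3)]
      ![x (.inl 0), x (.inl 1), x (.inl 2), x (.inl 3)]] i := by
  ext r
  fin_cases i <;> rcases r with r | r <;> fin_cases r <;>
    simp [sigmaMat, gammaMat, Matrix.mulVec, dotProduct, Fintype.sum_sum_type, Fin.sum_univ_four]

lemma spinProd_eq (x y : Spinor) : spinProd x y =
    -(x (.inr 1) * y (.inl 0)) + x (.inr 0) * y (.inl 1) + x (.inr 3) * y (.inl 2)
      - x (.inr 2) * y (.inl 3) + x (.inl 1) * y (.inr 0) - x (.inl 0) * y (.inr 1)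
      - x (.inl 3) * y (.inr 2) + x (.inl 2) * y (.inr 3) := by
  simp [spinProd, ← Matrix.mulVec_mulVec, sigmaMat_mulVec, dotProduct, Fintype.sum_sum_type,
    Fin.sum_univ_four]
  ring

lemma spinProd_smul_left (c : ℝ) (x y : Spinor) : spinProd (c • x) y = c * spinProd x y := by
  simp [spinProd, Matrix.mulVec_smul]

lemma spinProd_smul_right (c : ℝ) (x y : Spinor) : spinProd x (c • y) = c * spinProd x y := by
  simp [spinProd]

theorem spinProd_self_smul_eq_sum (ψ φ : Spinor) :
    spinProd ψ ψ • φ = spinProd ψ φ • ψ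
      - ∑ i, (gMetric i i * spinProd (sigmaMat i *ᵥ ψ) φ) • (sigmaMat i *ᵥ ψ) := by
  ext r
  simp only [Fin.sum_univ_seven, sigmaMat_mulVec, spinProd_eq, gMetric]
  rcases r with r | r <;> fin_cases r <;> simp <;> ring

lemma gMetric_self_mul_self (i : Fin 7) : gMetric i i * gMetric i i = 1 := by
  by_cases hi : (i : ℕ) < 4 <;> simp [gMetric, hi]

lemma gPair_single_right (u : Fin 7 → ℝ) (j : Fin 7) :
    gPair u (Pi.single j 1) = gMetric j j * u j := by
  simp [gPair, gMetric, Pi.single_apply, mul_comm]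

lemma gPair_smul_left (c : ℝ) (u v : Fin 7 → ℝ) : gPair (c • u) v = c * gPair u v := by
  simp only [gPair, Finset.mul_sum, Pi.smul_apply, smul_eq_mul]
  exact Finset.sum_congr rfl fun i _ => Finset.sum_congr rfl fun j _ => by ring

lemma eq_of_forall_gPair_eq {u v : Fin 7 → ℝ} (h : ∀ w, gPair u w = gPair v w) : u = v := by
  funext j
  have hj := h (Pi.single j 1)
  rw [gPair_single_right, gPair_single_right] at hj
  exact mul_left_cancel₀ (left_ne_zero_of_mul_eq_one (gMetric_self_mul_self j)) hj

lemma cliffordMul_single (i : Fin 7) (x : Spinor) :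
    cliffordMul (Pi.single i 1) x = sigmaMat i *ᵥ x := by
  simp [cliffordMul, Pi.single_apply]

section Dual

variable {ψ φ : Spinor} {V : Fin 7 → ℝ}

lemma dual_apply (hV : ∀ X, gPair V X = spinProd (cliffordMul X ψ) φ) (i : Fin 7) :
    V i = gMetric i i * spinProd (sigmaMat i *ᵥ ψ) φ := by
  have hi := hV (Pi.single i 1)
  rw [gPair_single_right, cliffordMul_single] at hi
  rw [← hi, ← mul_assoc, gMetric_self_mul_self, one_mul]

theorem spinProd_self_smul_eq_sub_cliffordMul
    (hV : ∀ X, gPair V X = spinProd (cliffordMul X ψ) φ) :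
    spinProd ψ ψ • φ = spinProd ψ φ • ψ - cliffordMul V ψ := by
  simp only [spinProd_self_smul_eq_sum, cliffordMul, dual_apply hV]

theorem dual_ne_zero (hψ : spinProd ψ ψ ≠ 0) (hφnull : spinProd φ φ = 0) (hφ : φ ≠ 0)
    (hV : ∀ X, gPair V X = spinProd (cliffordMul X ψ) φ) : V ≠ 0 := by
  rintro rfl
  have hline : spinProd ψ ψ • φ = spinProd ψ φ • ψ := by
    simpa [cliffordMul] using spinProd_self_smul_eq_sub_cliffordMul hV
  have hcoeff : spinProd ψ φ = 0 := by
    have hsq := congrArg (fun χ => spinProd χ χ) hline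
    simp only [spinProd_smul_left, spinProd_smul_right, hφnull, mul_zero] at hsq
    have : spinProd ψ φ ^ 2 * spinProd ψ ψ = 0 := by linarith
    simpa [hψ] using this
  rw [hcoeff, zero_smul, smul_eq_zero] at hline
  exact hφ (hline.resolve_left hψ)

end Dual

section Connection

variable {M : Type*}
  {Dv : (M → (Fin 7 → ℝ)) → (M → (Fin 7 → ℝ)) → (M → (Fin 7 → ℝ))}
  {Ds : (M → (Fin 7 → ℝ)) → (M → Spinor) → (M → Spinor)}
  {Df : (M → (Fin 7 → ℝ)) → (M → ℝ) → (M → ℝ)}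

theorem covariantDeriv_dual_eq_smul
    (hmet : ∀ X Y Z m, Df X (fun m' => gPair (Y m') (Z m')) m
      = gPair (Dv X Y m) (Z m) + gPair (Y m) (Dv X Z m))
    (hip : ∀ X (φ' ψ' : M → Spinor) m, Df X (fun m' => spinProd (φ' m') (ψ' m')) m
      = spinProd (Ds X φ' m) (ψ' m) + spinProd (φ' m) (Ds X ψ' m))
    (hcl : ∀ X Y (ψ' : M → Spinor) m, Ds X (fun m' => cliffordMul (Y m') (ψ' m')) m
      = cliffordMul (Dv X Y m) (ψ' m) + cliffordMul (Y m) (Ds X ψ' m))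
    {ψ φ : M → Spinor} {f : M → (Fin 7 → ℝ) → ℝ} {V : M → (Fin 7 → ℝ)}
    (hψpar : ∀ X, Ds X ψ = 0) (hφpar : ∀ X m, Ds X φ m = f m (X m) • φ m)
    (hV : ∀ m X, gPair (V m) X = spinProd (cliffordMul X (ψ m)) (φ m)) (X : M → (Fin 7 → ℝ))
    (m : M) : Dv X V m = f m (X m) • V m := by
  refine eq_of_forall_gPair_eq fun Y => ?_
  have hψY : Ds X (fun m' => cliffordMul Y (ψ m')) m
      = cliffordMul (Dv X (fun _ => Y) m) (ψ m) := by
    simpa [hψpar, cliffordMul] using hcl X (fun _ => Y) ψ m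
  calc gPair (Dv X V m) Y
      = Df X (fun m' => gPair (V m') Y) m - gPair (V m) (Dv X (fun _ => Y) m) := by
        rw [hmet X V (fun _ => Y) m]; ring
    _ = Df X (fun m' => spinProd (cliffordMul Y (ψ m')) (φ m')) m
          - spinProd (cliffordMul (Dv X (fun _ => Y) m) (ψ m)) (φ m) := by
        simp only [hV]
    _ = spinProd (cliffordMul Y (ψ m)) (Ds X φ m) := by
        rw [hip, hψY]; ring
    _ = gPair (f m (X m) • V m) Y := by
        rw [hφpar, spinProd_smul_right, gPair_smul_left, hV]

end Connection
/-- Let M̃ be a 7-dimensional spin manifold of signature (4,3),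
presented in an orthonormal trivialisation: vector fields are maps M → ℝ⁷, spinor
fields are maps M → Δ₄,₃ = ℝ⁸, with a covariant derivative `Dv` on vector fields
and `Ds` on spinor fields and a directional derivative `Df` on functions, which
are metric, compatible with the spinor inner product ⟨·,·⟩ and with Clifford
multiplication.  Suppose ψ is a parallel spinor with ⟨ψ,ψ⟩ ≠ 0, and φ spans a
parallel line of null spinors, ∇̃φ = f ⊗ φ, ⟨φ,φ⟩ = 0, φ ≠ 0.  Then the vector
field V defined by g̃(V,X) = ⟨X·ψ, φ⟩ satisfies ∇̃V = f ⊗ V (so it spans a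
parallel line bundle) and V is nowhere zero. -/
theorem parallel_line_from_parallel_spinors {M : Type*}
    (Dv : (M → (Fin 7 → ℝ)) → (M → (Fin 7 → ℝ)) → (M → (Fin 7 → ℝ)))
    (Ds : (M → (Fin 7 → ℝ)) → (M → Spinor) → (M → Spinor))
    (Df : (M → (Fin 7 → ℝ)) → (M → ℝ) → (M → ℝ))
    -- the connection is metric:
    (hmet : ∀ X Y Z m, Df X (fun m' => gPair (Y m') (Z m')) m
      = gPair (Dv X Y m) (Z m) + gPair (Y m) (Dv X Z m))
    -- the connection preserves the spinor inner product:
    (hip : ∀ X (φ' ψ' : M → Spinor) m, Df X (fun m' => spinProd (φ' m') (ψ' m')) m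
      = spinProd (Ds X φ' m) (ψ' m) + spinProd (φ' m) (Ds X ψ' m))
    -- the connection is compatible with Clifford multiplication:
    (hcl : ∀ X Y (ψ' : M → Spinor) m, Ds X (fun m' => cliffordMul (Y m') (ψ' m')) m
      = cliffordMul (Dv X Y m) (ψ' m) + cliffordMul (Y m) (Ds X ψ' m))
    -- ψ is a parallel non-null spinor field:
    (ψ : M → Spinor) (hψpar : ∀ X, Ds X ψ = 0)
    (hψnn : ∀ m, spinProd (ψ m) (ψ m) ≠ 0)
    -- φ spans a parallel line of null spinors, with connection 1-form f:
    (φ : M → Spinor) (f : M → (Fin 7 → ℝ) → ℝ)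
    (hφpar : ∀ X m, Ds X φ m = f m (X m) • φ m)
    (hφnull : ∀ m, spinProd (φ m) (φ m) = 0)
    (hφne : ∀ m, φ m ≠ 0)
    -- V is the vector field defined by g̃(V,X) = ⟨X·ψ,φ⟩:
    (V : M → (Fin 7 → ℝ))
    (hV : ∀ m (X : Fin 7 → ℝ), gPair (V m) X = spinProd (cliffordMul X (ψ m)) (φ m)) :
    (∀ X m, Dv X V m = f m (X m) • V m) ∧ (∀ m, V m ≠ 0) :=
  ⟨covariantDeriv_dual_eq_smul hmet hip hcl hψpar hφpar hV,
    fun m => dual_ne_zero (hψnn m) (hφnull m) (hφne m) (hV m)⟩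
end
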